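/- Let X = {x_0, x_1}, let D be uniform on {(x_0,0), (x_1,1)} (so p = 1/2), and let f*(x) = 1{x = x_1}, so that L(f*) = 0. For bag size k = 2, the EasyLLP loss estimates ℓ_EZ(f*, (B_i, α_i)) over i.i.d. bags are i.i.d. random variables taking the values +1/2 and −1/2 each with probability 1/2. Consequently there exist absolute constants c, c_0 > 0 such that for every ε ∈ (0,1) and every n ≤ c/ε², with probability at least c_0 over the n i.i.d. bags, L̂_EZ(f*) = (1/n)·Σ_{i=1}^n ℓ_EZ(f*, (B_i, α_i)) ≥ ε; and there is an absolute constant C such that for n ≥ C/ε², with probability at least 2/3, L̂_EZ(f*) ≤ ε. -/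
import Mathlib


open MeasureTheory Finset
open scoped ENNReal NNReal

noncomputable section

namespace LLP

/-- Real value of a Boolean label/prediction (`0` or `1`). -/
def bval (b : Bool) : ℝ := if b then 1 else 0

/-- Label proportion `α` of a bag of `k` labeled examples. -/
def labelProp {X : Type*} {k : ℕ} (bag : Fin k → X × Bool) : ℝ :=
  (∑ j, bval (bag j).2) / (k : ℝ)

/-- Average prediction `(1/k)·Σ_j f(x_j)` of `f` on a bag. -/
def predProp {X : Type*} {k : ℕ} (f : X → Bool) (bag : Fin k → X × Bool) : ℝ :=
  (∑ j, bval (f (bag j).1)) / (k : ℝ)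

/-- Instance-level classification loss `L(f) = Pr_{(x,y)∼D}[f(x) ≠ y]`. -/
def err {X : Type*} [MeasurableSpace X] (D : Measure (X × Bool)) (f : X → Bool) : ℝ :=
  (D {p | f p.1 ≠ p.2}).toReal

/-- `S` is shattered by the Boolean-valued class `F`. -/
def Shatters {Z : Type*} (F : Set (Z → Bool)) (S : Finset Z) : Prop :=
  ∀ T ⊆ S, ∃ f ∈ F, ∀ z ∈ S, (f z = true ↔ z ∈ T)

/-- The VC dimension of `F` is at most `d`. -/
def VCDimLE {Z : Type*} (F : Set (Z → Bool)) (d : ℕ) : Prop :=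
  ∀ S : Finset Z, Shatters F S → S.card ≤ d

/-- Joint distribution of `n` i.i.d. bags, each consisting of `k` i.i.d. draws from `D`. -/
def bagMeasure {X : Type*} [MeasurableSpace X] (D : Measure (X × Bool)) (n k : ℕ) :
    Measure (Fin n → Fin k → X × Bool) :=
  Measure.pi fun _ => Measure.pi fun _ => D

/-- Empirical proportional (0-1) risk: fraction of bags whose predicted proportion
mismatches the observed label proportion. -/
def empPM {X : Type*} {n k : ℕ} (f : X → Bool) (ω : Fin n → Fin k → X × Bool) : ℝ :=
  (∑ i, if predProp f (ω i) = labelProp (ω i) then (0 : ℝ) else 1) / (n : ℝ)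

/-- Empirical proportional square loss. -/
def empSQ {X : Type*} {n k : ℕ} (f : X → Bool) (ω : Fin n → Fin k → X × Bool) : ℝ :=
  (∑ i, (predProp f (ω i) - labelProp (ω i)) ^ 2) / (n : ℝ)

/-- The EasyLLP estimate of the 0-1 loss on a single bag, using marginal label
proportion `p`. -/
def ellEZ {X : Type*} {k : ℕ} (p : ℝ) (f : X → Bool) (bag : Fin k → X × Bool) : ℝ :=
  ((k : ℝ) * (labelProp bag - p) + p) * (1 - predProp f bag)
    + ((k : ℝ) * (p - labelProp bag) + (1 - p)) * predProp f bag

/-- Marginal label proportion `p = Pr[y = 1]`. -/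
def labelP {X : Type*} [MeasurableSpace X] (D : Measure (X × Bool)) : ℝ :=
  (D {q | q.2 = true}).toReal

end LLP

namespace LLP

/-- The instance space `{x₀, x₁}` encoded as `Bool` (`false = x₀`, `true = x₁`), and the
distribution that is uniform on `{(x₀,0), (x₁,1)}` (so `p = 1/2`). -/
def D3 : Measure (Bool × Bool) :=
  (PMF.uniformOfFinset ({(false, false), (true, true)} : Finset (Bool × Bool))
    (by decide)).toMeasure

/-- The optimal predictor `f*(x) = 1{x = x₁}`, which has `L(f*) = 0`. -/
def fstar3 : Bool → Bool := id


/-! ### Auxiliary machinery for the proof -/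

def sg (b : Bool) : ℝ := if b then 1/2 else -(1/2)
def Ssum {n : ℕ} (x : Fin n → Bool) : ℝ := ∑ i, sg (x i)

lemma sum_S_sq (n : ℕ) : ∑ x : Fin n → Bool, (Ssum x)^2 = n * 2^n / 4 := by
  induction n with
  | zero => simp [Ssum]
  | succ n ih =>
    rw [← (Fin.consEquiv (fun _ : Fin (n+1) => Bool)).sum_comp, Fintype.sum_prod_type]
    have hc : ∀ (b : Bool) (y : Fin n → Bool),
        Ssum ((Fin.consEquiv (fun _ : Fin (n+1) => Bool)) (b, y)) = sg b + Ssum y := by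
      intro b y; simp [Ssum, Fin.sum_univ_succ, Fin.consEquiv]
    simp only [hc]
    rw [Fintype.sum_bool]
    have : ∀ y : Fin n → Bool, (sg true + Ssum y)^2 + (sg false + Ssum y)^2
        = 1/2 + 2 * (Ssum y)^2 := by
      intro y; simp only [sg]; norm_num; ring
    rw [← Finset.sum_add_distrib]
    simp only [this]
    rw [Finset.sum_add_distrib, Finset.sum_const, ← Finset.mul_sum, ih]
    simp [Fintype.card_fun]
    ring

lemma sum_S_quad (n : ℕ) :
    ∑ x : Fin n → Bool, (Ssum x)^4 = (3*(n:ℝ)^2 - 2*n) * 2^n / 16 := by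
  induction n with
  | zero => simp [Ssum]
  | succ n ih =>
    rw [← (Fin.consEquiv (fun _ : Fin (n+1) => Bool)).sum_comp, Fintype.sum_prod_type]
    have hc : ∀ (b : Bool) (y : Fin n → Bool),
        Ssum ((Fin.consEquiv (fun _ : Fin (n+1) => Bool)) (b, y)) = sg b + Ssum y := by
      intro b y; simp [Ssum, Fin.sum_univ_succ, Fin.consEquiv]
    simp only [hc]
    rw [Fintype.sum_bool]
    have : ∀ y : Fin n → Bool, (sg true + Ssum y)^4 + (sg false + Ssum y)^4
        = 1/8 + 3 * (Ssum y)^2 + 2 * (Ssum y)^4 := by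
      intro y; simp only [sg]; norm_num; ring
    rw [← Finset.sum_add_distrib]
    simp only [this]
    rw [Finset.sum_add_distrib, Finset.sum_add_distrib, Finset.sum_const,
      ← Finset.mul_sum, ← Finset.mul_sum, ih, sum_S_sq]
    simp [Fintype.card_fun]
    push_cast
    ring

lemma Ssum_not {n : ℕ} (x : Fin n → Bool) : Ssum (fun i => !(x i)) = -Ssum x := by
  rw [Ssum, Ssum, ← Finset.sum_neg_distrib]
  exact Finset.sum_congr rfl fun i _ => by cases x i <;> simp [sg]

lemma card_symm {n : ℕ} (t : ℝ) [DecidablePred fun x : Fin n → Bool => t ≤ Ssum x]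
    [DecidablePred fun x : Fin n → Bool => Ssum x ≤ -t] :
    (univ.filter fun x : Fin n → Bool => t ≤ Ssum x).card
      = (univ.filter fun x : Fin n → Bool => Ssum x ≤ -t).card := by
  apply Finset.card_bij' (fun x _ => fun i => !(x i)) (fun x _ => fun i => !(x i))
  · intro x hx
    simp only [mem_filter, mem_univ, true_and] at *
    rw [Ssum_not]; linarith
  · intro x hx
    simp only [mem_filter, mem_univ, true_and] at *
    have := Ssum_not x
    linarith [this]
  · intro x _; funext i; simp
  · intro x _; funext i; simp

lemma card_ge (n : ℕ) (ε : ℝ) (hn : 1 ≤ n) (hε : 0 < ε) (h : (n:ℝ) ≤ (1/8) / ε^2) :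
    ∀ [DecidablePred fun x : Fin n → Bool => (n:ℝ)*ε ≤ Ssum x],
    (2:ℝ)^n / 24 ≤ ((univ.filter fun x : Fin n → Bool => (n:ℝ)*ε ≤ Ssum x).card : ℝ) := by
  classical
  intro _
  have hnR : (1:ℝ) ≤ n := by exact_mod_cast hn
  have h2n : (0:ℝ) < 2^n := by positivity
  have hne2 : (n:ℝ)*ε^2 ≤ 1/8 := by
    rw [le_div_iff₀ (by positivity)] at h; linarith
  set C := univ.filter fun x : Fin n → Bool => (n:ℝ)^2*ε^2 ≤ (Ssum x)^2 with hC
  set D := univ.filter (fun x : Fin n → Bool => ¬ ((n:ℝ)^2*ε^2 ≤ (Ssum x)^2)) with hD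
  have hsplit : ∑ x ∈ C, (Ssum x)^2 + ∑ x ∈ D, (Ssum x)^2
      = ∑ x : Fin n → Bool, (Ssum x)^2 :=
    Finset.sum_filter_add_sum_filter_not univ _ _
  have hcompl : ∑ x ∈ D, (Ssum x)^2 ≤ (2:ℝ)^n * ((n:ℝ)/8) := by
    have hb : ∀ x ∈ D, (Ssum x)^2 ≤ (n:ℝ)/8 := by
      intro x hx
      rw [hD, Finset.mem_filter] at hx
      have hlt : (Ssum x)^2 < (n:ℝ)^2*ε^2 := lt_of_not_ge hx.2
      nlinarith
    calc ∑ x ∈ D, (Ssum x)^2 ≤ ∑ _x ∈ D, ((n:ℝ)/8) := Finset.sum_le_sum hb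
      _ = (D.card : ℝ) * ((n:ℝ)/8) := by rw [Finset.sum_const, nsmul_eq_mul]
      _ ≤ (2:ℝ)^n * ((n:ℝ)/8) := by
          apply mul_le_mul_of_nonneg_right _ (by positivity)
          have := Finset.card_le_card (Finset.subset_univ D)
          calc (D.card : ℝ) ≤ ((univ : Finset (Fin n → Bool)).card : ℝ) := by
                exact_mod_cast this
            _ = (2:ℝ)^n := by simp [Fintype.card_fun]
  have hClow : (n:ℝ) * 2^n / 8 ≤ ∑ x ∈ C, (Ssum x)^2 := by
    have := sum_S_sq n
    nlinarith [hsplit, hcompl]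
  have hkey : ∀ x : Fin n → Bool, ((Ssum x)^2)^2 = (Ssum x)^4 := fun x => by ring
  have hCS : (∑ x ∈ C, (Ssum x)^2)^2 ≤ (3*(n:ℝ)^2 * 2^n / 16) * C.card := by
    have h1 : (∑ x ∈ C, (Ssum x)^2 * 1)^2
        ≤ (∑ x ∈ C, ((Ssum x)^2)^2) * ∑ x ∈ C, (1:ℝ)^2 :=
      Finset.sum_mul_sq_le_sq_mul_sq C _ _
    simp only [mul_one, one_pow, Finset.sum_const, nsmul_eq_mul, hkey] at h1
    have h2 : ∑ x ∈ C, (Ssum x)^4 ≤ 3*(n:ℝ)^2 * 2^n / 16 := by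
      have hsub : ∑ x ∈ C, (Ssum x)^4 ≤ ∑ x : Fin n → Bool, (Ssum x)^4 :=
        Finset.sum_le_sum_of_subset_of_nonneg (Finset.subset_univ C)
          (fun x _ _ => by positivity)
      have hq := sum_S_quad n
      nlinarith [mul_pos (show (0:ℝ) < (n:ℝ) by linarith) h2n]
    calc (∑ x ∈ C, (Ssum x)^2)^2 ≤ (∑ x ∈ C, (Ssum x)^4) * C.card := h1
      _ ≤ (3*(n:ℝ)^2 * 2^n / 16) * C.card := by
          apply mul_le_mul_of_nonneg_right h2 (by positivity)
  have hCcard : (2:ℝ)^n / 12 ≤ (C.card : ℝ) := by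
    have hpos : (0:ℝ) < 3*(n:ℝ)^2*2^n/16 := by positivity
    have hA : ((n:ℝ)*2^n/8)^2 ≤ (3*(n:ℝ)^2*2^n/16) * C.card := by
      have := mul_self_le_mul_self (by positivity : (0:ℝ) ≤ (n:ℝ)*2^n/8) hClow
      nlinarith [hCS]
    have hdiv : ((n:ℝ)*2^n/8)^2 / (3*(n:ℝ)^2*2^n/16) ≤ C.card := by
      rw [div_le_iff₀ hpos]; linarith
    have hXK : ((n:ℝ)*2^n/8)^2 / (3*(n:ℝ)^2*2^n/16) = 2^n/12 := by
      have hn0 : (n:ℝ) ≠ 0 := by linarith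
      have h20 : (2:ℝ)^n ≠ 0 := ne_of_gt h2n
      field_simp
      ring
    linarith [hXK ▸ hdiv]
  set A := univ.filter fun x : Fin n → Bool => (n:ℝ)*ε ≤ Ssum x with hA
  set B := univ.filter fun x : Fin n → Bool => Ssum x ≤ -((n:ℝ)*ε) with hB
  have hsub : C ⊆ A ∪ B := by
    intro x hx
    rw [hC, Finset.mem_filter] at hx
    rw [Finset.mem_union, hA, hB, Finset.mem_filter, Finset.mem_filter]
    rcases le_or_gt 0 (Ssum x) with h'|h'
    · left; refine ⟨Finset.mem_univ x, ?_⟩; nlinarith [hx.2]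
    · right; refine ⟨Finset.mem_univ x, ?_⟩; nlinarith [hx.2]
  have hAB : B.card = A.card := (card_symm ((n:ℝ)*ε)).symm
  have hc1 : C.card ≤ A.card + B.card :=
    le_trans (Finset.card_le_card hsub) (Finset.card_union_le A B)
  rw [hAB] at hc1
  have hc2 : (C.card : ℝ) ≤ 2 * A.card := by exact_mod_cast by omega
  linarith

lemma card_le (n : ℕ) (ε : ℝ) (hε : 0 < ε) (h : 1 / ε^2 ≤ (n:ℝ)) :
    ∀ [DecidablePred fun x : Fin n → Bool => Ssum x / n ≤ ε],
    (2:ℝ)^n * (2/3) ≤ ((univ.filter fun x : Fin n → Bool => Ssum x / n ≤ ε).card : ℝ) := by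
  classical
  intro _
  have hnR : (1:ℝ) ≤ (n:ℝ) * ε^2 := by
    rw [div_le_iff₀ (by positivity)] at h; linarith
  have hn0 : (0:ℝ) < n := by nlinarith [sq_nonneg ε]
  have h2n : (0:ℝ) < 2^n := by positivity
  set Bad := univ.filter (fun x : Fin n → Bool => ¬ (Ssum x / n ≤ ε)) with hBad
  have hb : ∀ x ∈ Bad, (n:ℝ)^2 * ε^2 ≤ (Ssum x)^2 := by
    intro x hx
    rw [hBad, Finset.mem_filter] at hx
    have hlt : ε < Ssum x / n := lt_of_not_ge hx.2
    have : (n:ℝ) * ε < Ssum x := by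
      rw [lt_div_iff₀ hn0] at hlt; linarith
    nlinarith [mul_pos hn0 hε]
  have hcheb : (Bad.card : ℝ) * ((n:ℝ)^2 * ε^2) ≤ (n:ℝ) * 2^n / 4 := by
    calc (Bad.card : ℝ) * ((n:ℝ)^2 * ε^2) = ∑ _x ∈ Bad, ((n:ℝ)^2 * ε^2) := by
          rw [Finset.sum_const, nsmul_eq_mul]
      _ ≤ ∑ x ∈ Bad, (Ssum x)^2 := Finset.sum_le_sum hb
      _ ≤ ∑ x : Fin n → Bool, (Ssum x)^2 :=
          Finset.sum_le_sum_of_subset_of_nonneg (Finset.subset_univ Bad)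
            (fun x _ _ => by positivity)
      _ = (n:ℝ) * 2^n / 4 := sum_S_sq n
  have hbadcard : (Bad.card : ℝ) ≤ (2:ℝ)^n / 4 := by
    have hp : (0:ℝ) < (n:ℝ)^2 * ε^2 := by positivity
    rw [← le_div_iff₀ hp] at hcheb
    calc (Bad.card : ℝ) ≤ (n:ℝ) * 2^n / 4 / ((n:ℝ)^2 * ε^2) := hcheb
      _ = (2:ℝ)^n / 4 / ((n:ℝ) * ε^2) := by
          field_simp
      _ ≤ (2:ℝ)^n / 4 / 1 := by
          apply div_le_div_of_nonneg_left (by positivity) (by norm_num) hnR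
      _ = (2:ℝ)^n / 4 := by norm_num
  have hfull : ((univ.filter fun x : Fin n → Bool => Ssum x / n ≤ ε).card : ℝ) + (Bad.card : ℝ)
      = (2:ℝ)^n := by
    have := Finset.card_filter_add_card_filter_not
      (s := (univ : Finset (Fin n → Bool))) (p := fun x => Ssum x / n ≤ ε)
    have h2 : (univ : Finset (Fin n → Bool)).card = 2^n := by simp [Fintype.card_fun]
    rw [h2] at this
    rw [hBad]
    push_cast [← this]
    norm_cast
  linarith

instance : IsProbabilityMeasure D3 := by unfold D3; infer_instance

def μB : Measure Bool := (PMF.uniformOfFintype Bool).toMeasure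
instance : IsProbabilityMeasure μB := by unfold μB; infer_instance

lemma muB_singleton (b : Bool) : μB {b} = 2⁻¹ := by
  rw [μB, PMF.toMeasure_apply_singleton _ _ (measurableSet_singleton _)]
  simp [PMF.uniformOfFintype_apply]

lemma D3_singleton (a : Bool × Bool) :
    D3 {a} = if a.1 = a.2 then 2⁻¹ else 0 := by
  rw [D3, PMF.toMeasure_apply_singleton _ _ (measurableSet_singleton _)]
  rcases a with ⟨a1, a2⟩
  cases a1 <;> cases a2 <;> simp [PMF.uniformOfFinset_apply]

/-- g : Bool → Bool × Bool, b ↦ (b,b) is measure preserving from μB to D3. -/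
lemma mp_g : MeasurePreserving (fun b : Bool => (b, b)) μB D3 := by
  refine ⟨.of_discrete, ?_⟩
  apply Measure.ext_of_singleton
  rintro ⟨a1, a2⟩
  rw [Measure.map_apply .of_discrete (measurableSet_singleton _)]
  cases a1 <;> cases a2
  · rw [show (fun b : Bool => (b, b)) ⁻¹' {(false, false)} = {false} by
      ext b; cases b <;> simp]
    rw [muB_singleton, D3_singleton]; rfl
  · rw [show (fun b : Bool => (b, b)) ⁻¹' {(false, true)} = (∅ : Set Bool) by
      ext b; cases b <;> simp]
    rw [D3_singleton]; simp
  · rw [show (fun b : Bool => (b, b)) ⁻¹' {(true, false)} = (∅ : Set Bool) by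
      ext b; cases b <;> simp]
    rw [D3_singleton]; simp
  · rw [show (fun b : Bool => (b, b)) ⁻¹' {(true, true)} = {true} by
      ext b; cases b <;> simp]
    rw [muB_singleton, D3_singleton]; rfl

lemma pi_muB_singleton {n : ℕ} (x : Fin n → Bool) :
    (Measure.pi fun _ : Fin n => μB) {x} = 2⁻¹ ^ n := by
  rw [show ({x} : Set (Fin n → Bool)) = Set.pi Set.univ (fun i => {x i}) from
    (Set.univ_pi_singleton x).symm, Measure.pi_pi]
  simp [muB_singleton]

lemma pi_muB_apply {n : ℕ} (P : (Fin n → Bool) → Prop) [DecidablePred P] :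
    (Measure.pi fun _ : Fin n => μB) {x | P x}
      = ((univ.filter P).card : ℝ≥0∞) * 2⁻¹ ^ n := by
  have h1 : (Measure.pi fun _ : Fin n => μB) {x | P x}
      = ∑ x : Fin n → Bool, ({x | P x} : Set _).indicator
          (fun x => (Measure.pi fun _ : Fin n => μB) {x}) x := by
    rw [← MeasureTheory.Measure.tsum_indicator_apply_singleton _ _ .of_discrete,
      tsum_fintype]
  rw [h1]
  have h2 : ∀ x : Fin n → Bool, ({x | P x} : Set _).indicator
      (fun x => (Measure.pi fun _ : Fin n => μB) {x}) x
      = if P x then 2⁻¹ ^ n else 0 := by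
    intro x
    rw [Set.indicator_apply]
    simp only [Set.mem_setOf_eq, pi_muB_singleton]
  simp only [h2]
  rw [← Finset.sum_filter, Finset.sum_const, nsmul_eq_mul]

/-- The inner bag map `v ↦ (v 0 != v 1)` pushes `pi μB` on `Fin 2 → Bool` to `μB`. -/
lemma mp_t2 : MeasurePreserving (fun v : Fin 2 → Bool => v 0 != v 1)
    (Measure.pi fun _ : Fin 2 => μB) μB := by
  refine ⟨.of_discrete, ?_⟩
  apply Measure.ext_of_singleton
  intro b
  rw [Measure.map_apply .of_discrete (measurableSet_singleton _)]
  have : ((fun v : Fin 2 → Bool => v 0 != v 1) ⁻¹' {b})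
      = {v : Fin 2 → Bool | (v 0 != v 1) = b} := rfl
  rw [this, pi_muB_apply (fun v : Fin 2 → Bool => (v 0 != v 1) = b), muB_singleton]
  have hcard : (univ.filter fun v : Fin 2 → Bool => (v 0 != v 1) = b).card = 2 := by
    cases b <;> decide
  rw [hcard]
  rw [show ((2:ℕ) : ℝ≥0∞) = 2 by norm_cast, pow_two, ← mul_assoc,
    ENNReal.mul_inv_cancel (by norm_num) (by norm_num), one_mul]

lemma ell_compute (v : Fin 2 → Bool) :
    ellEZ (1/2) fstar3 (fun j => (v j, v j)) = sg (v 0 != v 1) := by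
  rcases h0' : v 0 with _ | _ <;> rcases h1' : v 1 with _ | _ <;>
    simp only [ellEZ, labelProp, predProp, Fin.sum_univ_two, fstar3, id, bval, sg,
      h0', h1', Bool.bne_false, Bool.bne_true, Bool.not_false, Bool.not_true,
      if_true, if_false, Bool.false_bne, Bool.true_bne] <;>
    norm_num

lemma mp_F (n : ℕ) : MeasurePreserving
    (fun (ω : Fin n → Fin 2 → Bool) (i : Fin n) (j : Fin 2) => (ω i j, ω i j))
    (Measure.pi fun _ : Fin n => Measure.pi fun _ : Fin 2 => μB)
    (bagMeasure D3 n 2) :=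
  MeasureTheory.measurePreserving_pi _ _
    (fun _ => MeasureTheory.measurePreserving_pi _ _ (fun _ => mp_g))

lemma mp_T (n : ℕ) : MeasurePreserving
    (fun (ω : Fin n → Fin 2 → Bool) (i : Fin n) => ω i 0 != ω i 1)
    (Measure.pi fun _ : Fin n => Measure.pi fun _ : Fin 2 => μB)
    (Measure.pi fun _ : Fin n => μB) :=
  MeasureTheory.measurePreserving_pi _ _ (fun _ => mp_t2)

lemma bag_event {n : ℕ} (G : ℝ → Prop) :
    (bagMeasure D3 n 2) {ω | G ((∑ i, ellEZ (1/2) fstar3 (ω i)) / (n:ℝ))}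
      = (Measure.pi fun _ : Fin n => μB) {x | G (Ssum x / (n:ℝ))} := by
  rw [← (mp_F n).measure_preimage MeasurableSet.of_discrete.nullMeasurableSet]
  have hpre : (fun (ω : Fin n → Fin 2 → Bool) (i : Fin n) (j : Fin 2) => (ω i j, ω i j))
      ⁻¹' {ω | G ((∑ i, ellEZ (1/2) fstar3 (ω i)) / (n:ℝ))}
      = (fun (ω : Fin n → Fin 2 → Bool) (i : Fin n) => ω i 0 != ω i 1)
        ⁻¹' {x | G (Ssum x / (n:ℝ))} := by
    ext ω
    simp only [Set.mem_preimage, Set.mem_setOf_eq]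
    have : (∑ i, ellEZ (1/2) fstar3 (fun j => (ω i j, ω i j)))
        = Ssum (fun i => ω i 0 != ω i 1) := by
      rw [Ssum]
      exact Finset.sum_congr rfl fun i _ => ell_compute _
    rw [this]
  rw [hpre, (mp_T n).measure_preimage MeasurableSet.of_discrete.nullMeasurableSet]

lemma bag_toReal {n : ℕ} (G : ℝ → Prop)
    [DecidablePred fun x : Fin n → Bool => G (Ssum x / (n:ℝ))] :
    ((bagMeasure D3 n 2) {ω | G ((∑ i, ellEZ (1/2) fstar3 (ω i)) / (n:ℝ))}).toReal
      = ((univ.filter fun x : Fin n → Bool => G (Ssum x / (n:ℝ))).card : ℝ) * (1/2)^n := by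
  rw [bag_event, pi_muB_apply]
  rw [ENNReal.toReal_mul, ENNReal.toReal_pow]
  norm_num

/-- Proposition 2, slow concentration of the EasyLLP loss estimate.
For bag size `k = 2` the EasyLLP loss estimate of `f*` on a single bag is distributed
uniformly on `{+1/2, −1/2}` (so over i.i.d. bags the estimates are i.i.d. of this law).
Consequently there are constants `c, c₀ > 0` such that for every `ε ∈ (0,1)` and every
`1 ≤ n ≤ c/ε²`, with probability at least `c₀`, `L̂_EZ(f*) ≥ ε`; and there is a constant
`C` such that for `n ≥ C/ε²`, with probability at least `2/3`, `L̂_EZ(f*) ≤ ε`. -/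
theorem easyllp_slow_estimation :
    err D3 fstar3 = 0 ∧
    Measure.map (fun bag : Fin 2 → Bool × Bool => ellEZ (1 / 2) fstar3 bag)
        (Measure.pi fun _ : Fin 2 => D3) =
      (2 : ℝ≥0∞)⁻¹ • (Measure.dirac ((1 : ℝ) / 2) + Measure.dirac (-(1 / 2) : ℝ)) ∧
    (∃ c c₀ : ℝ, 0 < c ∧ 0 < c₀ ∧
      ∀ (ε : ℝ) (n : ℕ), 0 < ε → ε < 1 → 1 ≤ n → (n : ℝ) ≤ c / ε ^ 2 →
        c₀ ≤ ((bagMeasure D3 n 2)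
          {ω | ε ≤ (∑ i, ellEZ (1 / 2) fstar3 (ω i)) / (n : ℝ)}).toReal) ∧
    (∃ C : ℝ, 0 < C ∧
      ∀ (ε : ℝ) (n : ℕ), 0 < ε → ε < 1 → C / ε ^ 2 ≤ (n : ℝ) →
        2 / 3 ≤ ((bagMeasure D3 n 2)
          {ω | (∑ i, ellEZ (1 / 2) fstar3 (ω i)) / (n : ℝ) ≤ ε}).toReal) := by
  classical
  refine ⟨?_, ?_, ?_, ?_⟩
  · -- err D3 fstar3 = 0
    rw [err]
    have hset : {p : Bool × Bool | fstar3 p.1 ≠ p.2}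
        = ({(false, true)} ∪ {(true, false)} : Set (Bool × Bool)) := by
      ext ⟨a, b⟩; cases a <;> cases b <;> simp [fstar3]
    have h0 : D3 ({(false, true)} ∪ {(true, false)} : Set (Bool × Bool)) = 0 :=
      measure_union_null (by rw [D3_singleton]; simp) (by rw [D3_singleton]; simp)
    rw [hset, h0]
    simp
  · -- distribution of the single-bag estimate
    have h1 : MeasurePreserving (fun (v : Fin 2 → Bool) (j : Fin 2) => (v j, v j))
        (Measure.pi fun _ : Fin 2 => μB) (Measure.pi fun _ : Fin 2 => D3) :=
      MeasureTheory.measurePreserving_pi _ _ fun _ => mp_g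
    rw [← h1.map_eq, Measure.map_map Measurable.of_discrete h1.measurable]
    have hcomp : ((fun bag : Fin 2 → Bool × Bool => ellEZ (1 / 2) fstar3 bag)
          ∘ (fun (v : Fin 2 → Bool) (j : Fin 2) => (v j, v j)))
        = sg ∘ (fun v : Fin 2 → Bool => v 0 != v 1) := funext ell_compute
    rw [hcomp, ← Measure.map_map Measurable.of_discrete Measurable.of_discrete,
      mp_t2.map_eq]
    have hμB : μB = (2 : ℝ≥0∞)⁻¹ • (Measure.dirac true + Measure.dirac false) := by
      apply Measure.ext_of_singleton
      intro b
      cases b <;>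
        simp [muB_singleton, Measure.dirac_apply' _ (measurableSet_singleton _)]
    rw [hμB, Measure.map_smul, Measure.map_add _ _ Measurable.of_discrete,
      Measure.map_dirac' Measurable.of_discrete, Measure.map_dirac' Measurable.of_discrete]
    norm_num [sg]
  · -- slow lower bound
    refine ⟨1/8, 1/24, by norm_num, by norm_num, ?_⟩
    intro ε n hε hε1 hn hnle
    have hn0 : (0:ℝ) < n := by exact_mod_cast hn
    have hbt := bag_toReal (n := n) (fun r => ε ≤ r)
    beta_reduce at hbt
    rw [hbt]
    have hfilter : (univ.filter fun x : Fin n → Bool => ε ≤ Ssum x / (n:ℝ))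
        = univ.filter fun x : Fin n → Bool => (n:ℝ)*ε ≤ Ssum x := by
      apply Finset.filter_congr
      intro x _
      rw [le_div_iff₀ hn0, mul_comm]
    rw [hfilter]
    have hcard := card_ge n ε hn hε hnle
    have h2n : (0:ℝ) < 2^n := by positivity
    have hp : (0:ℝ) ≤ (1/2:ℝ)^n := by positivity
    have hmul := mul_le_mul_of_nonneg_right hcard hp
    have hone : (2:ℝ)^n * (1/2)^n = 1 := by rw [← mul_pow]; norm_num
    nlinarith [hmul, hone]
  · -- fast upper bound
    refine ⟨1, by norm_num, ?_⟩
    intro ε n hε hε1 hnge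
    have hbt := bag_toReal (n := n) (fun r => r ≤ ε)
    beta_reduce at hbt
    rw [hbt]
    have hcard := card_le n ε hε hnge
    have hp : (0:ℝ) ≤ (1/2:ℝ)^n := by positivity
    have hmul := mul_le_mul_of_nonneg_right hcard hp
    have hone : (2:ℝ)^n * (1/2)^n = 1 := by rw [← mul_pow]; norm_num
    nlinarith [hmul, hone]


end LLP
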